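/- arXiv:1910.05268 — 5 statements merged into one kernel-verified Lean document; each statement's English description precedes it below -/
import Mathlib

section
/- Let N ≥ 2, let g ∈ ℝᴺ be nonzero, let ζ ∈ ℝᴺ be a unit vector with g⊥ = g − ⟨g, ζ⟩ζ ≠ 0, and let ε be a unit vector orthogonal to ζ. Define ζ' = ⟨g, ζ⟩ζ + ⟨g, ε⟩ε and assume ζ' ≠ 0. Then 1 − ⟨g/‖g‖, ζ'/‖ζ'‖⟩² = (1 − ⟨g/‖g‖, ζ⟩²) · (1 − ⟨g⊥/‖g⊥‖, ε⟩²). -/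
open scoped RealInnerProductSpace

/-! With `a = ⟨g, ζ⟩`, `b = ⟨g, ε⟩` and `G = ‖g‖²`, the vector `ζ'` is the orthogonal projection of
`g` onto `span {ζ, ε}`, so `⟨g, ζ'⟩ = ‖ζ'‖² = a² + b²`; likewise `‖g⊥‖² = G - a²` and
`⟨g⊥, ε⟩ = b`. Both sides then equal `(G - a² - b²) / G`. -/

section

variable {E : Type*} [NormedAddCommGroup E] [InnerProductSpace ℝ E]

theorem norm_sub_inner_smul_sq_of_norm_eq_one {ζ : E} (hζ : ‖ζ‖ = 1) (g : E) :
    ‖g - ⟪g, ζ⟫ • ζ‖ ^ 2 = ‖g‖ ^ 2 - ⟪g, ζ⟫ ^ 2 := by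
  rw [norm_sub_sq_real, real_inner_smul_right, norm_smul, hζ, mul_one, Real.norm_eq_abs, sq_abs]
  ring

theorem real_inner_sub_inner_smul_of_inner_eq_zero {ζ ε : E} (hεζ : ⟪ε, ζ⟫ = 0) (g : E) :
    ⟪g - ⟪g, ζ⟫ • ζ, ε⟫ = ⟪g, ε⟫ := by
  rw [inner_sub_left, real_inner_smul_left, real_inner_comm ε ζ, hεζ, mul_zero, sub_zero]

theorem norm_smul_add_smul_sq_of_orthonormal {ζ ε : E} (hζ : ‖ζ‖ = 1) (hε : ‖ε‖ = 1)
    (hεζ : ⟪ε, ζ⟫ = 0) (a b : ℝ) : ‖a • ζ + b • ε‖ ^ 2 = a ^ 2 + b ^ 2 := by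
  have hζε : ⟪a • ζ, b • ε⟫ = 0 := by
    rw [real_inner_smul_left, real_inner_smul_right, real_inner_comm, hεζ, mul_zero, mul_zero]
  rw [sq, norm_add_sq_eq_norm_sq_add_norm_sq_real hζε, norm_smul, norm_smul, hζ, hε,
    Real.norm_eq_abs, Real.norm_eq_abs, mul_one, mul_one, ← sq, ← sq, sq_abs, sq_abs]

theorem real_inner_inner_smul_add_inner_smul (g ζ ε : E) :
    ⟪g, ⟪g, ζ⟫ • ζ + ⟪g, ε⟫ • ε⟫ = ⟪g, ζ⟫ ^ 2 + ⟪g, ε⟫ ^ 2 := by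
  rw [inner_add_right, real_inner_smul_right, real_inner_smul_right]
  ring

end

theorem one_sub_cosine_sq_update_general
    (N : ℕ)
    (g ζ : EuclideanSpace ℝ (Fin N)) (hg : g ≠ 0) (hζ : ‖ζ‖ = 1)
    (gperp : EuclideanSpace ℝ (Fin N))
    (hgperp : gperp = g - ⟪g, ζ⟫ • ζ) (hgperp0 : gperp ≠ 0)
    (ε : EuclideanSpace ℝ (Fin N)) (hε : ‖ε‖ = 1) (hεζ : ⟪ε, ζ⟫ = 0)
    (ζ' : EuclideanSpace ℝ (Fin N))
    (hζ' : ζ' = ⟪g, ζ⟫ • ζ + ⟪g, ε⟫ • ε) (hζ'0 : ζ' ≠ 0) :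
    1 - ⟪‖g‖⁻¹ • g, ‖ζ'‖⁻¹ • ζ'⟫ ^ 2
      = (1 - ⟪‖g‖⁻¹ • g, ζ⟫ ^ 2) * (1 - ⟪‖gperp‖⁻¹ • gperp, ε⟫ ^ 2) := by
  have hζ'_inner : ⟪g, ζ'⟫ = ⟪g, ζ⟫ ^ 2 + ⟪g, ε⟫ ^ 2 :=
    hζ' ▸ real_inner_inner_smul_add_inner_smul g ζ ε
  have hζ'_norm : ‖ζ'‖ ^ 2 = ⟪g, ζ⟫ ^ 2 + ⟪g, ε⟫ ^ 2 :=
    hζ' ▸ norm_smul_add_smul_sq_of_orthonormal hζ hε hεζ _ _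
  have hgperp_norm : ‖gperp‖ ^ 2 = ‖g‖ ^ 2 - ⟪g, ζ⟫ ^ 2 :=
    hgperp ▸ norm_sub_inner_smul_sq_of_norm_eq_one hζ g
  have hgperp_inner : ⟪gperp, ε⟫ = ⟪g, ε⟫ :=
    hgperp ▸ real_inner_sub_inner_smul_of_inner_eq_zero hεζ g
  have hg_sq : ‖g‖ ^ 2 ≠ 0 := pow_ne_zero 2 (norm_ne_zero_iff.mpr hg)
  have hζ'_sq : ⟪g, ζ⟫ ^ 2 + ⟪g, ε⟫ ^ 2 ≠ 0 :=
    hζ'_norm ▸ pow_ne_zero 2 (norm_ne_zero_iff.mpr hζ'0)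
  have hgperp_sq : ‖g‖ ^ 2 - ⟪g, ζ⟫ ^ 2 ≠ 0 :=
    hgperp_norm ▸ pow_ne_zero 2 (norm_ne_zero_iff.mpr hgperp0)
  simp only [real_inner_smul_left, real_inner_smul_right, mul_pow, inv_pow, hζ'_inner,
    hζ'_norm, hgperp_inner, hgperp_norm]
  field_simp
  ring

/-- One step of the iterative estimator: with `ζ' = ⟨g, ζ⟩ ζ + ⟨g, ε⟩ ε` for a unit vector `ε`
orthogonal to the unit vector `ζ`, one has
`1 - ⟨ĝ, ζ̂'⟩² = (1 - ⟨ĝ, ζ⟩²) (1 - ⟨ĝ⊥, ε⟩²)`. -/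
theorem one_sub_cosine_sq_update
    (N : ℕ) (hN : 2 ≤ N)
    (g ζ : EuclideanSpace ℝ (Fin N)) (hg : g ≠ 0) (hζ : ‖ζ‖ = 1)
    (gperp : EuclideanSpace ℝ (Fin N))
    (hgperp : gperp = g - ⟪g, ζ⟫ • ζ) (hgperp0 : gperp ≠ 0)
    (ε : EuclideanSpace ℝ (Fin N)) (hε : ‖ε‖ = 1) (hεζ : ⟪ε, ζ⟫ = 0)
    (ζ' : EuclideanSpace ℝ (Fin N))
    (hζ' : ζ' = ⟪g, ζ⟫ • ζ + ⟪g, ε⟫ • ε) (hζ'0 : ζ' ≠ 0) :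
    1 - ⟪‖g‖⁻¹ • g, ‖ζ'‖⁻¹ • ζ'⟫ ^ 2
      = (1 - ⟪‖g‖⁻¹ • g, ζ⟫ ^ 2) * (1 - ⟪‖gperp‖⁻¹ • gperp, ε⟫ ^ 2) :=
  one_sub_cosine_sq_update_general N g ζ hg hζ gperp hgperp hgperp0 ε hε hεζ ζ' hζ' hζ'0
end

section
/- Let N ≥ 2 and 1 ≤ P ≤ N−1. Let g ∈ ℝᴺ be nonzero, let ζ ∈ ℝᴺ be a unit vector, and set x = ⟨g/‖g‖, ζ⟩. Let ε¹, …, εᴾ be random unit vectors taking values in the orthogonal complement of ζ such that almost surely they are pairwise orthogonal and each εⁱ is marginally distributed according to the uniform probability measure on the unit sphere of the (N−1)-dimensional orthogonal complement of ζ. Define ζ' = ⟨g, ζ⟩ζ + Σᵢ ⟨g, εⁱ⟩εⁱ and assume ζ' ≠ 0 almost surely. Then E[⟨g/‖g‖, ζ'/‖ζ'‖⟩²] − x² = (1 − x²) · P/(N − 1). -/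
open scoped RealInnerProductSpace
open MeasureTheory

/-!
Almost surely `ζ, ε¹, …, εᴾ` are orthonormal and `ζ'` is the orthogonal projection of `g` onto
their span, so `⟪g, ζ'⟫ = ‖ζ'‖²` and the squared cosine is `(⟪g, ζ⟫² + ∑ᵢ ⟪g, εⁱ⟫²) / ‖g‖²`.
A law on the unit sphere of a subspace `K` that is invariant under the isometries fixing `Kᗮ`
has the same second moment `∫ ⟪u, y⟫²` in all unit directions `u ∈ K`, because a reflection
fixing `Kᗮ` carries any one of them to any other; summing over an orthonormal basis of `K`,
where the squares add up to `‖y‖² = 1`, gives `∫ ⟪u, y⟫² = ‖u‖² / dim K`. For `K = ζᗮ` and the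
component of `g` in `K` this is `E ⟪g, εⁱ⟫² = (‖g‖² - ⟪g, ζ⟫²) / (N - 1)`.
-/

section

variable {E : Type*} [NormedAddCommGroup E] [InnerProductSpace ℝ E]

lemma sq_inner_normalize_of_inner_eq_norm_sq {g z : E} (h : ⟪g, z⟫ = ‖z‖ ^ 2) :
    ⟪‖g‖⁻¹ • g, ‖z‖⁻¹ • z⟫ ^ 2 = ‖z‖ ^ 2 / ‖g‖ ^ 2 := by
  rw [real_inner_smul_left, real_inner_smul_right, h]
  rcases eq_or_ne ‖z‖ 0 with hz | hz
  · simp [hz]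
  · field_simp

lemma inner_sum_inner_smul {ι : Type*} [Fintype ι] (g : E) (v : ι → E) :
    ⟪g, ∑ i, ⟪g, v i⟫ • v i⟫ = ∑ i, ⟪g, v i⟫ ^ 2 := by
  simp only [inner_sum, real_inner_smul_right, sq]

lemma Orthonormal.norm_sq_sum_inner_smul {ι : Type*} [Fintype ι] {v : ι → E}
    (hv : Orthonormal ℝ v) (g : E) :
    ‖∑ i, ⟪g, v i⟫ • v i‖ ^ 2 = ∑ i, ⟪g, v i⟫ ^ 2 := by
  rw [← real_inner_self_eq_norm_sq, hv.inner_sum]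
  simp [sq]

lemma orthonormal_optionElim {ι : Type*} {e : E} {v : ι → E} (he : ‖e‖ = 1)
    (hv : Orthonormal ℝ v) (hev : ∀ i, ⟪e, v i⟫ = 0) :
    Orthonormal ℝ (fun o : Option ι => o.elim e v) := by
  classical
  rw [orthonormal_iff_ite] at hv ⊢
  rintro (_ | i) (_ | j)
  · simp [he]
  · simp [hev]
  · simp [real_inner_comm, hev]
  · simp [hv]

variable [MeasurableSpace E] [BorelSpace E]

lemma integrable_inner_sq {α : Type*} [MeasurableSpace α] {μ : Measure α} [IsFiniteMeasure μ]
    {X : α → E} (hX : AEMeasurable X μ) (hX1 : ∀ᵐ a ∂μ, ‖X a‖ ≤ 1) (u : E) :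
    Integrable (fun a => ⟪u, X a⟫ ^ 2) μ := by
  have hmeas : Measurable fun y : E => ⟪u, y⟫ ^ 2 := by fun_prop
  refine (integrable_const (‖u‖ ^ 2)).mono' (hmeas.comp_aemeasurable hX).aestronglyMeasurable ?_
  filter_upwards [hX1] with a ha
  rw [Real.norm_eq_abs, abs_pow]
  calc |⟪u, X a⟫| ^ 2 ≤ (‖u‖ * ‖X a‖) ^ 2 := by gcongr; exact abs_real_inner_le_norm u (X a)
    _ ≤ (‖u‖ * 1) ^ 2 := by gcongr
    _ = ‖u‖ ^ 2 := by rw [mul_one]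

variable {μ : Measure E} {K : Submodule ℝ E}

lemma integral_inner_sq_eq_of_norm_eq
    (hinv : ∀ R : E ≃ₗᵢ[ℝ] E, (∀ z ∈ Kᗮ, R z = z) → μ.map R = μ)
    {v w : E} (hv : v ∈ K) (hw : w ∈ K) (hvw : ‖v‖ = ‖w‖) :
    ∫ y, ⟪v, y⟫ ^ 2 ∂μ = ∫ y, ⟪w, y⟫ ^ 2 ∂μ := by
  set R := (ℝ ∙ (v - w))ᗮ.reflection
  have hR : ∀ z ∈ Kᗮ, R z = z := fun z hz =>
    Submodule.reflection_mem_subspace_eq_self <|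
      Submodule.mem_orthogonal_singleton_iff_inner_right.2 <|
        Submodule.inner_right_of_mem_orthogonal (K.sub_mem hv hw) hz
  calc ∫ y, ⟪v, y⟫ ^ 2 ∂μ = ∫ y, ⟪v, y⟫ ^ 2 ∂(μ.map R) := by rw [hinv R hR]
    _ = ∫ y, ⟪v, R y⟫ ^ 2 ∂μ :=
        integral_map R.continuous.aemeasurable (by fun_prop)
    _ = ∫ y, ⟪w, y⟫ ^ 2 ∂μ := by
        congr 1 with y
        rw [← R.inner_map_map v, Submodule.reflection_reflection, Submodule.reflection_sub hvw]

variable [IsProbabilityMeasure μ]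

lemma sum_integral_inner_sq_orthonormalBasis {ι : Type*} [Fintype ι]
    (hμ : ∀ᵐ y ∂μ, y ∈ K ∧ ‖y‖ = 1) (b : OrthonormalBasis ι ℝ K) :
    ∑ k, ∫ y, ⟪(b k : E), y⟫ ^ 2 ∂μ = 1 := by
  have hint : ∀ u : E, Integrable (fun y => ⟪u, y⟫ ^ 2) μ :=
    integrable_inner_sq aemeasurable_id (hμ.mono fun _ hy => hy.2.le)
  rw [← integral_finsetSum _ fun k _ => hint _]
  have hsum : ∀ᵐ y ∂μ, ∑ k, ⟪(b k : E), y⟫ ^ 2 = 1 := by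
    filter_upwards [hμ] with y ⟨hyK, hy1⟩
    simpa [hy1] using b.sum_sq_inner_right ⟨y, hyK⟩
  simp [integral_congr_ae hsum]

lemma integral_inner_sq_eq_div_finrank [FiniteDimensional ℝ K]
    (hμ : ∀ᵐ y ∂μ, y ∈ K ∧ ‖y‖ = 1)
    (hinv : ∀ R : E ≃ₗᵢ[ℝ] E, (∀ z ∈ Kᗮ, R z = z) → μ.map R = μ) {u : E} (hu : u ∈ K) :
    ∫ y, ⟪u, y⟫ ^ 2 ∂μ = ‖u‖ ^ 2 / Module.finrank ℝ K := by
  rcases eq_or_ne (Module.finrank ℝ K) 0 with hn | hn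
  · have hu0 : u = 0 := by rwa [Submodule.finrank_eq_zero.1 hn, Submodule.mem_bot] at hu
    simp [hu0]
  set b := stdOrthonormalBasis ℝ K
  have hb : ∀ k, ∫ y, ⟪u, y⟫ ^ 2 ∂μ = ‖u‖ ^ 2 * ∫ y, ⟪(b k : E), y⟫ ^ 2 ∂μ := by
    intro k
    rw [integral_inner_sq_eq_of_norm_eq hinv hu (K.smul_mem ‖u‖ (b k).2)
      (by simp [norm_smul, ← Submodule.coe_norm])]
    simp only [real_inner_smul_left, mul_pow, integral_const_mul]
  have hn_mul : (Module.finrank ℝ K : ℝ) * ∫ y, ⟪u, y⟫ ^ 2 ∂μ = ‖u‖ ^ 2 :=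
    calc (Module.finrank ℝ K : ℝ) * ∫ y, ⟪u, y⟫ ^ 2 ∂μ
        = ∑ k, ‖u‖ ^ 2 * ∫ y, ⟪(b k : E), y⟫ ^ 2 ∂μ := by simp [← hb]
      _ = ‖u‖ ^ 2 := by
          rw [← Finset.mul_sum, sum_integral_inner_sq_orthonormalBasis hμ b, mul_one]
  rw [← hn_mul]
  field_simp

lemma integral_inner_sq_of_rotationInvariant [FiniteDimensional ℝ E] {Ω : Type*}
    [MeasurableSpace Ω] {P : Measure Ω} [IsProbabilityMeasure P] {ζ : E} (hζ : ‖ζ‖ = 1)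
    {X : Ω → E} (hX : Measurable X)
    (hval : ∀ᵐ ω ∂P, ‖X ω‖ = 1 ∧ ⟪X ω, ζ⟫ = 0)
    (hinv : ∀ R : E ≃ₗᵢ[ℝ] E, R ζ = ζ → Measure.map (fun y => R y) (P.map X) = P.map X)
    (g : E) :
    ∫ ω, ⟪g, X ω⟫ ^ 2 ∂P = (‖g‖ ^ 2 - ⟪g, ζ⟫ ^ 2) / (Module.finrank ℝ E - 1) := by
  set K := (ℝ ∙ ζ)ᗮ
  have := Measure.isProbabilityMeasure_map (μ := P) hX.aemeasurable
  have hK {y : E} : y ∈ K ↔ ⟪y, ζ⟫ = 0 := Submodule.mem_orthogonal_singleton_iff_inner_left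
  have hsupp : ∀ᵐ y ∂P.map X, y ∈ K ∧ ‖y‖ = 1 := by
    refine (ae_map_iff hX.aemeasurable ?_).2 (hval.mono fun ω h => ⟨hK.2 h.2, h.1⟩)
    exact (Submodule.isClosed_orthogonal _).measurableSet.inter
      (measurableSet_eq_fun measurable_norm measurable_const)
  have hfix : ∀ R : E ≃ₗᵢ[ℝ] E, (∀ z ∈ Kᗮ, R z = z) → (P.map X).map R = P.map X := fun R hR =>
    hinv R (hR ζ ((ℝ ∙ ζ).le_orthogonal_orthogonal (Submodule.mem_span_singleton_self ζ)))
  set u := g - ⟪g, ζ⟫ • ζ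
  have hu : u ∈ K := hK.2 <| by
    rw [inner_sub_left, real_inner_smul_left, real_inner_self_eq_norm_sq, hζ]; ring
  have hu_norm : ‖u‖ ^ 2 = ‖g‖ ^ 2 - ⟪g, ζ⟫ ^ 2 := by
    rw [norm_sub_sq_real, norm_smul, real_inner_smul_right, hζ, Real.norm_eq_abs, mul_one, sq_abs]
    ring
  have hrank : (Module.finrank ℝ K : ℝ) = Module.finrank ℝ E - 1 := by
    have := (ℝ ∙ ζ).finrank_add_finrank_orthogonal
    rw [finrank_span_singleton (by rintro rfl; simp at hζ)] at this
    rw [← this]; push_cast; ring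
  calc ∫ ω, ⟪g, X ω⟫ ^ 2 ∂P = ∫ y, ⟪g, y⟫ ^ 2 ∂P.map X := by
        rw [integral_map hX.aemeasurable
          ((continuous_const.inner continuous_id).pow 2).aestronglyMeasurable]
    _ = ∫ y, ⟪u, y⟫ ^ 2 ∂P.map X := integral_congr_ae <| hsupp.mono fun y hy => by
        have hζy : ⟪ζ, y⟫ = 0 := by rw [real_inner_comm]; exact hK.1 hy.1
        simp [u, inner_sub_left, real_inner_smul_left, hζy]
    _ = _ := by rw [integral_inner_sq_eq_div_finrank hsupp hfix hu, hu_norm, hrank]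

end

theorem expected_cosine_sq_gain_one_step_general
    (N P : ℕ)
    {Ω : Type*} [MeasureSpace Ω] [IsProbabilityMeasure (volume : Measure Ω)]
    (g ζ : EuclideanSpace ℝ (Fin N)) (hg : g ≠ 0) (hζ : ‖ζ‖ = 1)
    (x : ℝ) (hx : x = ⟪‖g‖⁻¹ • g, ζ⟫)
    (ε : Fin P → Ω → EuclideanSpace ℝ (Fin N)) (hmeas : ∀ i, Measurable (ε i))
    (hval : ∀ᵐ ω, ∀ i, ‖ε i ω‖ = 1 ∧ ⟪ε i ω, ζ⟫ = 0)
    (horth : ∀ᵐ ω, ∀ i j, i ≠ j → ⟪ε i ω, ε j ω⟫ = 0)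
    (hinv : ∀ i, ∀ R : EuclideanSpace ℝ (Fin N) ≃ₗᵢ[ℝ] EuclideanSpace ℝ (Fin N), R ζ = ζ →
      Measure.map (fun y => R y) (Measure.map (ε i) volume) = Measure.map (ε i) volume)
    (ζ' : Ω → EuclideanSpace ℝ (Fin N))
    (hζ' : ∀ ω, ζ' ω = ⟪g, ζ⟫ • ζ + ∑ i, ⟪g, ε i ω⟫ • ε i ω) :
    (∫ ω, ⟪‖g‖⁻¹ • g, ‖ζ' ω‖⁻¹ • ζ' ω⟫ ^ 2) - x ^ 2
      = (1 - x ^ 2) * ((P : ℝ) / ((N : ℝ) - 1)) := by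
  have hcos : ∀ᵐ ω, ⟪‖g‖⁻¹ • g, ‖ζ' ω‖⁻¹ • ζ' ω⟫ ^ 2
      = (⟪g, ζ⟫ ^ 2 + ∑ i, ⟪g, ε i ω⟫ ^ 2) / ‖g‖ ^ 2 := by
    filter_upwards [hval, horth] with ω hunit horth
    set v : Option (Fin P) → EuclideanSpace ℝ (Fin N) := fun o => o.elim ζ (ε · ω)
    have hv : Orthonormal ℝ v := orthonormal_optionElim hζ ⟨fun i => (hunit i).1, horth⟩
      fun i => by rw [real_inner_comm]; exact (hunit i).2
    have hζ'v : ζ' ω = ∑ o, ⟪g, v o⟫ • v o := by rw [hζ', Fintype.sum_option]; rfl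
    rw [sq_inner_normalize_of_inner_eq_norm_sq (by rw [hζ'v, inner_sum_inner_smul,
      hv.norm_sq_sum_inner_smul]), hζ'v, hv.norm_sq_sum_inner_smul, Fintype.sum_option]
    rfl
  have hint : ∀ i, Integrable (fun ω => ⟪g, ε i ω⟫ ^ 2) :=
    fun i => integrable_inner_sq (hmeas i).aemeasurable (hval.mono fun _ h => (h i).1.le) g
  have hmoment : ∀ i, ∫ ω, ⟪g, ε i ω⟫ ^ 2 = (‖g‖ ^ 2 - ⟪g, ζ⟫ ^ 2) / ((N : ℝ) - 1) := fun i => by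
    simpa using integral_inner_sq_of_rotationInvariant hζ (hmeas i)
      (hval.mono fun _ h => h i) (hinv i) g
  rw [integral_congr_ae hcos, integral_div, integral_add (integrable_const _)
    (integrable_finsetSum _ fun i _ => hint i), integral_finsetSum _ fun i _ => hint i]
  simp only [integral_const, probReal_univ, smul_eq_mul, one_mul, hmoment, Finset.sum_const,
    Finset.card_univ, Fintype.card_fin, nsmul_eq_mul, hx, real_inner_smul_left]
  have hgn : ‖g‖ ≠ 0 := norm_ne_zero_iff.2 hg
  field_simp
  ring

/-- One-step improvement of the cosine: for a nonzero `g`, a unit vector `ζ` with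
`x = ⟨ĝ, ζ⟩`, and random unit vectors `ε¹, …, εᴾ` in the orthogonal complement of `ζ`,
almost surely pairwise orthogonal and each marginally uniformly distributed (invariant under
all rotations fixing `ζ`) on the unit sphere of that complement, the update
`ζ' = ⟨g, ζ⟩ ζ + ∑ i ⟨g, εⁱ⟩ εⁱ` satisfies
`E[⟨ĝ, ζ̂'⟩²] - x² = (1 - x²) P/(N-1)`. -/
theorem expected_cosine_sq_gain_one_step
    (N P : ℕ) (hN : 2 ≤ N) (hP : 1 ≤ P) (hPN : P ≤ N - 1)
    {Ω : Type*} [MeasureSpace Ω] [IsProbabilityMeasure (volume : Measure Ω)]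
    (g ζ : EuclideanSpace ℝ (Fin N)) (hg : g ≠ 0) (hζ : ‖ζ‖ = 1)
    (x : ℝ) (hx : x = ⟪‖g‖⁻¹ • g, ζ⟫)
    (ε : Fin P → Ω → EuclideanSpace ℝ (Fin N)) (hmeas : ∀ i, Measurable (ε i))
    (hval : ∀ᵐ ω, ∀ i, ‖ε i ω‖ = 1 ∧ ⟪ε i ω, ζ⟫ = 0)
    (horth : ∀ᵐ ω, ∀ i j, i ≠ j → ⟪ε i ω, ε j ω⟫ = 0)
    (hinv : ∀ i, ∀ R : EuclideanSpace ℝ (Fin N) ≃ₗᵢ[ℝ] EuclideanSpace ℝ (Fin N), R ζ = ζ →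
      Measure.map (fun y => R y) (Measure.map (ε i) volume) = Measure.map (ε i) volume)
    (ζ' : Ω → EuclideanSpace ℝ (Fin N))
    (hζ' : ∀ ω, ζ' ω = ⟪g, ζ⟫ • ζ + ∑ i, ⟪g, ε i ω⟫ • ε i ω)
    (hζ'0 : ∀ᵐ ω, ζ' ω ≠ 0) :
    (∫ ω, ⟪‖g‖⁻¹ • g, ‖ζ' ω‖⁻¹ • ζ' ω⟫ ^ 2) - x ^ 2
      = (1 - x ^ 2) * ((P : ℝ) / ((N : ℝ) - 1)) :=
  expected_cosine_sq_gain_one_step_general N P g ζ hg hζ x hx ε hmeas hval horth hinv ζ' hζ'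
end

section
/- Let N ≥ 2, P ≥ 1 and δ ∈ (0, 1). Let (X_t)_{t≥0} be a stochastic process adapted to a filtration (F_t) with values in [0, 1] such that for all t ≥ 1, almost surely E[X_t² | F_{t−1}] = X_{t−1}² + (1 − X_{t−1}²)·P/(N − 1). Let T = inf{t ≥ 0 : X_t² ≥ 1 − δ}. Then E[T] ≤ ((N − 1)/P)·(1 + ln(1/δ)). -/
/-!
Write `Y t = 1 - X t ^ 2` and `p = P / (N - 1)`; the hypothesis says
`E[Y (t+1) | F t] = (1 - p) * Y t`. The potential `φ y = ∫₀^y dz / max δ z`, i.e. `y / δ` below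
`δ` and `1 + log (y / δ)` above, is concave with slope `1 / max δ y`, so conditional Jensen gives
`E[φ (Y (t+1)) | F t] ≤ φ ((1 - p) * Y t) ≤ φ (Y t) - p` while `Y t > δ`. Telescoping
`E[φ (Y t); T > t]` then yields `E[T] = ∑ₜ P(T > t) ≤ E[φ (Y 0)] / p ≤ φ 1 / p`.
-/

open MeasureTheory Set
open scoped ENNReal

universe u

lemma ConcaveOn.of_le_add_mul_sub {s : Set ℝ} {f g : ℝ → ℝ} (hs : Convex ℝ s)
    (h : ∀ w ∈ s, ∀ z ∈ s, f z ≤ f w + g w * (z - w)) : ConcaveOn ℝ s f := by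
  refine ⟨hs, fun x hx y hy a b ha hb hab => ?_⟩
  set c := a • x + b • y with hc
  have hcs : c ∈ s := hs hx hy ha hb hab
  simp only [smul_eq_mul] at hc ⊢
  calc a * f x + b * f y
      ≤ a * (f c + g c * (x - c)) + b * (f c + g c * (y - c)) := by
        gcongr <;> exact h c hcs _ ‹_›
    _ = f c := by rw [hc]; linear_combination (f c - g c * c) * hab

noncomputable def driftPotential (δ y : ℝ) : ℝ :=
  if y ≤ δ then y / δ else 1 + Real.log (y / δ)

section Potential

variable {δ : ℝ}

lemma driftPotential_of_le {y : ℝ} (hy : y ≤ δ) : driftPotential δ y = y / δ := if_pos hy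

lemma driftPotential_of_lt {y : ℝ} (hy : δ < y) :
    driftPotential δ y = 1 + Real.log (y / δ) := if_neg hy.not_ge

lemma driftPotential_le_div (hδ : 0 < δ) (z : ℝ) : driftPotential δ z ≤ z / δ := by
  rcases le_or_gt z δ with hz | hz
  · exact (driftPotential_of_le hz).le
  · rw [driftPotential_of_lt hz]
    linarith [Real.log_le_sub_one_of_pos (div_pos (hδ.trans hz) hδ)]

lemma driftPotential_le_add_mul_sub (hδ : 0 < δ) (w z : ℝ) :
    driftPotential δ z ≤ driftPotential δ w + (max δ w)⁻¹ * (z - w) := by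
  rcases le_or_gt w δ with hw | hw
  · rw [driftPotential_of_le hw, max_eq_left hw]
    calc driftPotential δ z ≤ z / δ := driftPotential_le_div hδ z
      _ = w / δ + δ⁻¹ * (z - w) := by ring
  have hw0 : 0 < w := hδ.trans hw
  rw [driftPotential_of_lt hw, max_eq_right hw.le]
  rcases le_or_gt z δ with hz | hz
  · have hlog : 1 - δ / w ≤ Real.log (w / δ) := by
      simpa using Real.one_sub_inv_le_log_of_pos (div_pos hw0 hδ)
    have hslope : z * (δ⁻¹ - w⁻¹) ≤ δ * (δ⁻¹ - w⁻¹) :=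
      mul_le_mul_of_nonneg_right hz (sub_nonneg.2 (inv_anti₀ hδ hw.le))
    have hw_slope : w⁻¹ * (z - w) = z / w - 1 := by field_simp
    have hδ_slope : δ * (δ⁻¹ - w⁻¹) = 1 - δ / w := by field_simp
    rw [driftPotential_of_le hz, hw_slope]
    linarith [show z / δ = z * (δ⁻¹ - w⁻¹) + z / w by ring]
  · have hz0 : 0 < z := hδ.trans hz
    have hlog := Real.log_le_sub_one_of_pos (div_pos hz0 hw0)
    have hsplit : Real.log (z / δ) = Real.log (z / w) + Real.log (w / δ) := by
      rw [← Real.log_mul (by positivity) (by positivity)]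
      field_simp
    have hw_slope : w⁻¹ * (z - w) = z / w - 1 := by field_simp
    rw [driftPotential_of_lt hz, hsplit, hw_slope]
    linarith

lemma driftPotential_nonneg (hδ : 0 < δ) {z : ℝ} (hz : 0 ≤ z) : 0 ≤ driftPotential δ z := by
  rcases le_or_gt z δ with hzδ | hzδ
  · rw [driftPotential_of_le hzδ]
    positivity
  · rw [driftPotential_of_lt hzδ]
    linarith [Real.log_nonneg ((one_le_div hδ).2 hzδ.le)]

lemma monotone_driftPotential (hδ : 0 < δ) : Monotone (driftPotential δ) := fun z w hzw => by
  have hslope : 0 ≤ (max δ w)⁻¹ := inv_nonneg.2 (hδ.le.trans (le_max_left δ w))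
  linarith [driftPotential_le_add_mul_sub hδ w z,
    mul_nonpos_of_nonneg_of_nonpos hslope (sub_nonpos.2 hzw)]

lemma driftPotential_one (hδ : δ < 1) : driftPotential δ 1 = 1 + Real.log (1 / δ) :=
  driftPotential_of_lt hδ

lemma driftPotential_one_sub_mul_le (hδ : 0 < δ) {y : ℝ} (hy : δ < y) (p : ℝ) :
    driftPotential δ ((1 - p) * y) ≤ driftPotential δ y - p := by
  have hy0 : y ≠ 0 := (hδ.trans hy).ne'
  have hslope : (max δ y)⁻¹ * ((1 - p) * y - y) = -p := by
    rw [max_eq_right hy.le]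
    field_simp
    ring
  linarith [driftPotential_le_add_mul_sub hδ y ((1 - p) * y)]

lemma concaveOn_driftPotential (hδ : 0 < δ) : ConcaveOn ℝ univ (driftPotential δ) :=
  .of_le_add_mul_sub convex_univ fun w _ z _ => driftPotential_le_add_mul_sub hδ w z

lemma continuous_driftPotential (hδ : 0 < δ) : Continuous (driftPotential δ) :=
  continuousOn_univ.1 ((concaveOn_driftPotential hδ).continuousOn isOpen_univ)

end Potential

lemma iInf_natCast_eq_tsum_indicator (q : ℕ → Prop) :
    ⨅ (t : ℕ) (_ : q t), (t : ℝ≥0∞) = ∑' n, {n | ∀ s ≤ n, ¬ q s}.indicator 1 n := by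
  classical
  by_cases h : ∃ t, q t
  · have hinf : ⨅ (t : ℕ) (_ : q t), (t : ℝ≥0∞) = Nat.find h :=
      le_antisymm (iInf₂_le _ (Nat.find_spec h))
        (le_iInf₂ fun t ht => Nat.cast_le.2 (Nat.find_min' h ht))
    have hset : {n | ∀ s ≤ n, ¬ q s} = Iio (Nat.find h) := by
      ext n
      simp
    rw [hinf, hset, tsum_eq_sum (s := Finset.range (Nat.find h))]
    · rw [Finset.sum_congr rfl fun n hn => indicator_of_mem (s := Iio (Nat.find h))
        (Finset.mem_range.1 hn) (1 : ℕ → ℝ≥0∞)]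
      simp
    · intro n hn
      simpa using hn
  · push Not at h
    simp [h]

section HittingTime

variable {Ω : Type u} {mΩ : MeasurableSpace Ω} {q : ℕ → Ω → Prop}

lemma MeasureTheory.Filtration.measurableSet_forall_le_not {F : Filtration ℕ mΩ}
    (hq : ∀ s, MeasurableSet[F s] {ω | q s ω}) (n : ℕ) :
    MeasurableSet[F n] {ω | ∀ s ≤ n, ¬ q s ω} := by
  simp only [ofPred_forall]
  exact .iInter fun s => .iInter fun hs => F.mono hs _ (hq s).compl

lemma lintegral_iInf_natCast_eq_tsum_measure (μ : Measure Ω)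
    (hq : ∀ n, MeasurableSet {ω | ∀ s ≤ n, ¬ q s ω}) :
    ∫⁻ ω, ⨅ (t : ℕ) (_ : q t ω), (t : ℝ≥0∞) ∂μ = ∑' n, μ {ω | ∀ s ≤ n, ¬ q s ω} := by
  calc ∫⁻ ω, ⨅ (t : ℕ) (_ : q t ω), (t : ℝ≥0∞) ∂μ
      = ∫⁻ ω, ∑' n, {ω | ∀ s ≤ n, ¬ q s ω}.indicator 1 ω ∂μ := by
        congr with ω
        rw [iInf_natCast_eq_tsum_indicator]
        rfl
    _ = ∑' n, μ {ω | ∀ s ≤ n, ¬ q s ω} := by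
        rw [lintegral_tsum fun n => (measurable_one.indicator (hq n)).aemeasurable]
        exact tsum_congr fun n => lintegral_indicator_one (hq n)

end HittingTime

section AdditiveDrift

variable {Ω : Type u} {mΩ : MeasurableSpace Ω} {μ : Measure Ω} [IsFiniteMeasure μ]
  {F : Filtration ℕ mΩ} {Φ : ℕ → Ω → ℝ} {A : ℕ → Set Ω} {p : ℝ}

lemma setIntegral_succ_add_le_of_drift {t : ℕ} (hA : MeasurableSet[F t] (A t))
    (hA_succ : A (t + 1) ⊆ A t)
    (hΦ_nonneg : 0 ≤ᵐ[μ] Φ (t + 1)) (hΦ_int : Integrable (Φ t) μ)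
    (hΦ_int_succ : Integrable (Φ (t + 1)) μ)
    (hdrift : ∀ᵐ ω ∂μ, ω ∈ A t → μ[Φ (t + 1) | F t] ω ≤ Φ t ω - p) :
    ∫ ω in A (t + 1), Φ (t + 1) ω ∂μ + p * μ.real (A t) ≤ ∫ ω in A t, Φ t ω ∂μ := by
  have hsucc : ∫ ω in A (t + 1), Φ (t + 1) ω ∂μ ≤ ∫ ω in A t, Φ (t + 1) ω ∂μ :=
    setIntegral_mono_set hΦ_int_succ.integrableOn (ae_restrict_of_ae hΦ_nonneg)
      hA_succ.eventuallyLE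
  have hcond : ∫ ω in A t, Φ (t + 1) ω ∂μ ≤ ∫ ω in A t, (Φ t ω - p) ∂μ := by
    rw [← setIntegral_condExp (F.le t) hΦ_int_succ hA]
    exact setIntegral_mono_ae_restrict integrable_condExp.integrableOn
      (hΦ_int.sub (integrable_const p)).integrableOn
      ((ae_restrict_iff' (F.le t _ hA)).2 hdrift)
  rw [integral_sub hΦ_int.integrableOn (integrable_const p).integrableOn, setIntegral_const,
    smul_eq_mul] at hcond
  linarith

theorem tsum_measure_le_of_drift (hp : 0 < p) (hA : ∀ t, MeasurableSet[F t] (A t))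
    (hA_succ : ∀ t, A (t + 1) ⊆ A t) (hΦ_nonneg : ∀ t, 0 ≤ᵐ[μ] Φ t)
    (hΦ_int : ∀ t, Integrable (Φ t) μ)
    (hdrift : ∀ t, ∀ᵐ ω ∂μ, ω ∈ A t → μ[Φ (t + 1) | F t] ω ≤ Φ t ω - p) :
    ∑' t, μ (A t) ≤ ENNReal.ofReal ((∫ ω, Φ 0 ω ∂μ) / p) := by
  have htelescope : ∀ n, ∫ ω in A n, Φ n ω ∂μ + p * ∑ t ∈ Finset.range n, μ.real (A t)
      ≤ ∫ ω in A 0, Φ 0 ω ∂μ := by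
    intro n
    induction n with
    | zero => simp
    | succ n ih =>
      have := setIntegral_succ_add_le_of_drift (hA n) (hA_succ n) (hΦ_nonneg (n + 1))
        (hΦ_int n) (hΦ_int (n + 1)) (hdrift n)
      rw [Finset.sum_range_succ, mul_add]
      linarith
  have hrestrict : ∫ ω in A 0, Φ 0 ω ∂μ ≤ ∫ ω, Φ 0 ω ∂μ :=
    setIntegral_le_integral (hΦ_int 0) (hΦ_nonneg 0)
  refine ENNReal.tsum_le_of_sum_range_le fun n => ?_
  have hpartial : ∑ t ∈ Finset.range n, μ.real (A t) ≤ (∫ ω, Φ 0 ω ∂μ) / p := by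
    rw [le_div_iff₀' hp]
    linarith [htelescope n, setIntegral_nonneg_of_ae_restrict (s := A n)
      (ae_restrict_of_ae (hΦ_nonneg n))]
  calc ∑ t ∈ Finset.range n, μ (A t)
      = ENNReal.ofReal (∑ t ∈ Finset.range n, μ.real (A t)) := by
        rw [ENNReal.ofReal_sum_of_nonneg fun t _ => measureReal_nonneg]
        simp [ofReal_measureReal]
    _ ≤ _ := ENNReal.ofReal_le_ofReal hpartial

end AdditiveDrift

section PotentialDrift

variable {Ω : Type u} {m mΩ : MeasurableSpace Ω} {μ : Measure Ω} [IsFiniteMeasure μ] {δ p : ℝ}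
  {Z W : Ω → ℝ}

lemma integrable_driftPotential_one_sub (hδ : 0 < δ) (hZ : AEMeasurable Z μ)
    (hZ01 : ∀ ω, Z ω ∈ Icc 0 1) : Integrable (fun ω => driftPotential δ (1 - Z ω)) μ :=
  .of_mem_Icc 0 (driftPotential δ 1)
    ((continuous_driftPotential hδ).measurable.comp_aemeasurable (aemeasurable_const.sub hZ))
    (ae_of_all _ fun ω => ⟨driftPotential_nonneg hδ (sub_nonneg.2 (hZ01 ω).2),
      monotone_driftPotential hδ (sub_le_self _ (hZ01 ω).1)⟩)

lemma condExp_driftPotential_one_sub_le (hm : m ≤ mΩ) (hδ : 0 < δ) (hZ : AEMeasurable Z μ)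
    (hZ01 : ∀ ω, Z ω ∈ Icc 0 1) (hcond : μ[Z | m] =ᵐ[μ] fun ω => W ω + (1 - W ω) * p) :
    ∀ᵐ ω ∂μ, δ < 1 - W ω →
      μ[fun ω => driftPotential δ (1 - Z ω) | m] ω ≤ driftPotential δ (1 - W ω) - p := by
  have hZ_int : Integrable Z μ := .of_mem_Icc 0 1 hZ (ae_of_all _ hZ01)
  filter_upwards [(concaveOn_driftPotential hδ).condExp_map_le_univ hm
    (continuous_driftPotential hδ).upperSemicontinuous ((integrable_const 1).sub hZ_int)
    (integrable_driftPotential_one_sub hδ hZ hZ01),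
    condExp_sub (integrable_const 1) hZ_int m, hcond] with ω hjensen hsub hω hW
  rw [Function.comp_apply, hsub, Pi.sub_apply, condExp_const hm, hω] at hjensen
  calc μ[fun ω => driftPotential δ (1 - Z ω) | m] ω
      ≤ driftPotential δ (1 - (W ω + (1 - W ω) * p)) := hjensen
    _ = driftPotential δ ((1 - p) * (1 - W ω)) := by congr 1; ring
    _ ≤ driftPotential δ (1 - W ω) - p := driftPotential_one_sub_mul_le hδ hW p

lemma integral_driftPotential_one_sub_le [IsProbabilityMeasure μ] (hδ : 0 < δ) (hδ1 : δ < 1)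
    (hZ : AEMeasurable Z μ) (hZ01 : ∀ ω, Z ω ∈ Icc 0 1) :
    ∫ ω, driftPotential δ (1 - Z ω) ∂μ ≤ 1 + Real.log (1 / δ) := by
  rw [← driftPotential_one hδ1]
  simpa using integral_mono (integrable_driftPotential_one_sub hδ hZ hZ01) (integrable_const _)
    fun ω => monotone_driftPotential hδ (sub_le_self _ (hZ01 ω).1)

end PotentialDrift

/-- Additive-drift bound on the hitting time of the iterative ES estimator: if the squared
cosine process `X_t²` with values in `[0,1]` satisfies
`E[X_t² | F_{t-1}] = X_{t-1}² + (1 - X_{t-1}²) P/(N-1)`, then the first time `T` with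
`X_T² ≥ 1 - δ` satisfies `E[T] ≤ ((N-1)/P) (1 + ln(1/δ))`. -/
theorem hitting_time_bound_variable_drift
    (N P : ℕ) (hN : 2 ≤ N) (hP : 1 ≤ P)
    (δ : ℝ) (hδ : δ ∈ Set.Ioo (0 : ℝ) 1)
    {Ω : Type*} {mΩ : MeasurableSpace Ω} (μ : Measure Ω) [IsProbabilityMeasure μ]
    (F : Filtration ℕ mΩ)
    (X : ℕ → Ω → ℝ) (hadp : Adapted F X)
    (hrange : ∀ t ω, X t ω ∈ Set.Icc (0 : ℝ) 1)
    (hdrift : ∀ t : ℕ, 1 ≤ t →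
      μ[fun ω => (X t ω) ^ 2 | F (t - 1)]
        =ᵐ[μ] fun ω => (X (t - 1) ω) ^ 2
          + (1 - (X (t - 1) ω) ^ 2) * ((P : ℝ) / ((N : ℝ) - 1))) :
    ∫⁻ ω, ⨅ (t : ℕ) (_ : 1 - δ ≤ (X t ω) ^ 2), (t : ℝ≥0∞) ∂μ
      ≤ ENNReal.ofReal ((((N : ℝ) - 1) / P) * (1 + Real.log (1 / δ))) := by
  obtain ⟨hδ0, hδ1⟩ := hδ
  have hN1 : (0 : ℝ) < N - 1 := by linarith [show (2 : ℝ) ≤ N by exact_mod_cast hN]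
  have hp : (0 : ℝ) < P / (N - 1) := div_pos (by exact_mod_cast hP) hN1
  have hX2 : ∀ t, AEMeasurable (fun ω => X t ω ^ 2) μ := fun t =>
    (((hadp t).mono (F.le t) le_rfl).pow_const 2).aemeasurable
  have hX2_01 : ∀ t ω, X t ω ^ 2 ∈ Icc 0 1 := fun t ω =>
    ⟨by positivity, pow_le_one₀ (hrange t ω).1 (hrange t ω).2⟩
  have hA := F.measurableSet_forall_le_not (q := fun s ω => 1 - δ ≤ X s ω ^ 2) fun s => measurableSet_le measurable_const ((hadp s).pow_const 2)
  rw [lintegral_iInf_natCast_eq_tsum_measure μ fun n => F.le n _ (hA n)]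
  refine (tsum_measure_le_of_drift (Φ := fun t ω => driftPotential δ (1 - X t ω ^ 2)) hp hA
    (fun n ω hω s hs => hω s (hs.trans n.le_succ))
    (fun t => ae_of_all _ fun ω => driftPotential_nonneg hδ0 (sub_nonneg.2 (hX2_01 t ω).2))
    (fun t => integrable_driftPotential_one_sub hδ0 (hX2 t) (hX2_01 t)) fun t => ?_).trans
    (ENNReal.ofReal_le_ofReal ?_)
  · filter_upwards [condExp_driftPotential_one_sub_le (F.le t) hδ0 (hX2 (t + 1)) (hX2_01 (t + 1))
      (by simpa using hdrift (t + 1) le_add_self)] with ω hω hωA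
    exact hω (by linarith [not_le.1 (hωA t le_rfl)])
  · calc (∫ ω, driftPotential δ (1 - X 0 ω ^ 2) ∂μ) / (P / (N - 1))
        ≤ (1 + Real.log (1 / δ)) / (P / (N - 1)) := by
          gcongr
          exact integral_driftPotential_one_sub_le hδ0 hδ1 (hX2 0) (hX2_01 0)
      _ = ((N : ℝ) - 1) / P * (1 + Real.log (1 / δ)) := by field_simp
end

section
/- Let N ≥ 2, let g and ζ be unit vectors in ℝᴺ with x = ⟨g, ζ⟩, and let α ∈ [0, 1]. Let w be a random vector distributed according to the uniform probability measure on the sphere of radius √(1−α²) in the orthogonal complement of g, and set g' = α·g + w (so g' is almost surely a unit vector). Then E[⟨g', ζ⟩²] = α²x² + (1 − α²)(1 − x²)/(N − 1). -/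
open scoped RealInnerProductSpace
open MeasureTheory

/-!
Every reflection fixing `g` preserves the law of `w`. The reflection in the hyperplane orthogonal
to `u - v` fixes `g` and maps `u` to `v` as soon as `‖u‖ = ‖v‖` and `⟪u, g⟫ = ⟪v, g⟫`, so the law of
`⟪w, u⟫` depends only on these two numbers. Since `w ⟂ g`, only the component
`P u = u - ⟪g, u⟫ g` of `u` matters; comparing `P u` with `-P u` gives `E⟪w, u⟫ = 0`, and scaling
gives `E⟪w, u⟫² = c ‖P u‖²` for a constant `c`. Summing over an orthonormal basis, Parseval
turns this into `c (N - 1) = E‖w‖² = 1 - α²`.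
-/

section

variable {E : Type*} [NormedAddCommGroup E] [InnerProductSpace ℝ E] {g : E}

theorem inner_sub_inner_smul_eq_zero (hg : ‖g‖ = 1) (u : E) : ⟪u - ⟪g, u⟫ • g, g⟫ = 0 := by
  rw [inner_sub_left, real_inner_smul_left, real_inner_self_eq_norm_sq, hg, real_inner_comm]
  ring

theorem norm_sub_inner_smul_sq (hg : ‖g‖ = 1) (u : E) :
    ‖u - ⟪g, u⟫ • g‖ ^ 2 = ‖u‖ ^ 2 - ⟪g, u⟫ ^ 2 := by
  rw [norm_sub_sq_real, norm_smul, real_inner_smul_right, hg, real_inner_comm, Real.norm_eq_abs,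
    mul_one, sq_abs]
  ring

theorem sum_norm_sub_inner_smul_sq {ι : Type*} [Fintype ι] (hg : ‖g‖ = 1)
    (b : OrthonormalBasis ι ℝ E) :
    ∑ i, ‖b i - ⟪g, b i⟫ • g‖ ^ 2 = Fintype.card ι - 1 := by
  simp_rw [norm_sub_inner_smul_sq hg, b.orthonormal.1, one_pow, Finset.sum_sub_distrib,
    b.sum_sq_inner_left, hg, one_pow, Finset.sum_const, Finset.card_univ, nsmul_one]

variable [MeasurableSpace E] {μ : Measure E}

theorem integral_comp_inner_sub_inner_smul (hperp : ∀ᵐ y ∂μ, ⟪y, g⟫ = 0) (f : ℝ → ℝ) (u : E) :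
    ∫ y, f ⟪y, u - ⟪g, u⟫ • g⟫ ∂μ = ∫ y, f ⟪y, u⟫ ∂μ := by
  refine integral_congr_ae (hperp.mono fun y hy => ?_)
  simp only [inner_sub_right, real_inner_smul_right, hy, mul_zero, sub_zero]

variable [BorelSpace E]

theorem integrable_inner_pow [IsFiniteMeasure μ] {r : ℝ} (hnorm : ∀ᵐ y ∂μ, ‖y‖ = r) (v : E)
    (n : ℕ) : Integrable (fun y => ⟪y, v⟫ ^ n) μ := by
  refine .of_bound (by fun_prop) ((r * ‖v‖) ^ n) (hnorm.mono fun y hy => ?_)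
  rw [norm_pow, ← hy]
  exact pow_le_pow_left₀ (norm_nonneg _) (norm_inner_le_norm y v) n

theorem sum_integral_inner_sq [IsProbabilityMeasure μ] {ι : Type*} [Fintype ι] {r : ℝ}
    (hnorm : ∀ᵐ y ∂μ, ‖y‖ = r) (b : OrthonormalBasis ι ℝ E) :
    ∑ i, ∫ y, ⟪y, b i⟫ ^ 2 ∂μ = r ^ 2 := by
  rw [← integral_finsetSum _ fun i _ => integrable_inner_pow hnorm (b i) 2]
  simp_rw [b.sum_sq_inner_left]
  rw [integral_congr_ae (hnorm.mono fun y hy => by rw [hy])]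
  simp

theorem integral_comp_inner_eq_of_invariant
    (hμ : ∀ R : E ≃ₗᵢ[ℝ] E, R g = g → μ.map (fun y => R y) = μ)
    {u v : E} (hnorm : ‖u‖ = ‖v‖) (hinner : ⟪u, g⟫ = ⟪v, g⟫) (f : ℝ → ℝ) :
    ∫ y, f ⟪y, u⟫ ∂μ = ∫ y, f ⟪y, v⟫ ∂μ := by
  set R := (ℝ ∙ (u - v))ᗮ.reflection
  have hRg : R g = g := Submodule.reflection_mem_subspace_eq_self <|
    Submodule.mem_orthogonal_singleton_iff_inner_right.2 (by rw [inner_sub_left, hinner, sub_self])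
  have hRv : R v = u := by rw [← Submodule.reflection_sub hnorm, Submodule.reflection_reflection]
  calc ∫ y, f ⟪y, u⟫ ∂μ = ∫ y, f ⟪y, u⟫ ∂μ.map R.toMeasurableEquiv := by
        rw [R.coe_toMeasurableEquiv, hμ R hRg]
    _ = ∫ y, f ⟪R y, u⟫ ∂μ := integral_map_equiv _ _
    _ = ∫ y, f ⟪y, v⟫ ∂μ := by simp_rw [← hRv, LinearIsometryEquiv.inner_map_map]

theorem integral_inner_eq_zero_of_invariant
    (hμ : ∀ R : E ≃ₗᵢ[ℝ] E, R g = g → μ.map (fun y => R y) = μ) {v : E} (hv : ⟪v, g⟫ = 0) :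
    ∫ y, ⟪y, v⟫ ∂μ = 0 := by
  have h := integral_comp_inner_eq_of_invariant hμ (norm_neg v).symm
    (by rw [inner_neg_left, hv, neg_zero]) id
  simp only [id, inner_neg_right, integral_neg] at h
  linarith

theorem integral_inner_sq_mul_norm_sq_comm
    (hμ : ∀ R : E ≃ₗᵢ[ℝ] E, R g = g → μ.map (fun y => R y) = μ) {u v : E}
    (hu : ⟪u, g⟫ = 0) (hv : ⟪v, g⟫ = 0) :
    (∫ y, ⟪y, u⟫ ^ 2 ∂μ) * ‖v‖ ^ 2 = (∫ y, ⟪y, v⟫ ^ 2 ∂μ) * ‖u‖ ^ 2 := by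
  rcases eq_or_ne v 0 with rfl | hv0
  · simp
  have hv0' : ‖v‖ ≠ 0 := norm_ne_zero_iff.2 hv0
  have hscale : ∫ y, ⟪y, u⟫ ^ 2 ∂μ = ∫ y, ⟪y, (‖u‖ / ‖v‖) • v⟫ ^ 2 ∂μ :=
    integral_comp_inner_eq_of_invariant hμ
      (by rw [norm_smul, Real.norm_of_nonneg (by positivity), div_mul_cancel₀ _ hv0'])
      (by rw [hu, real_inner_smul_left, hv, mul_zero]) (· ^ 2)
  simp_rw [hscale, real_inner_smul_right, mul_pow, integral_const_mul]
  field_simp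

theorem integral_inner_eq_zero
    (hμ : ∀ R : E ≃ₗᵢ[ℝ] E, R g = g → μ.map (fun y => R y) = μ) (hg : ‖g‖ = 1)
    (hperp : ∀ᵐ y ∂μ, ⟪y, g⟫ = 0) (u : E) :
    ∫ y, ⟪y, u⟫ ∂μ = 0 :=
  (integral_comp_inner_sub_inner_smul hperp id u).symm.trans
    (integral_inner_eq_zero_of_invariant hμ (inner_sub_inner_smul_eq_zero hg u))

theorem integral_inner_smul_add_sq [IsProbabilityMeasure μ]
    (hμ : ∀ R : E ≃ₗᵢ[ℝ] E, R g = g → μ.map (fun y => R y) = μ) (hg : ‖g‖ = 1)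
    (hperp : ∀ᵐ y ∂μ, ⟪y, g⟫ = 0) {r : ℝ} (hnorm : ∀ᵐ y ∂μ, ‖y‖ = r) (a : ℝ) (u : E) :
    ∫ y, ⟪a • g + y, u⟫ ^ 2 ∂μ = (a * ⟪g, u⟫) ^ 2 + ∫ y, ⟪y, u⟫ ^ 2 ∂μ := by
  have hint : Integrable (fun y => ⟪y, u⟫) μ := by simpa using integrable_inner_pow hnorm u 1
  have hexpand : ∀ y, ⟪a • g + y, u⟫ ^ 2
      = (a * ⟪g, u⟫) ^ 2 + 2 * (a * ⟪g, u⟫) * ⟪y, u⟫ + ⟪y, u⟫ ^ 2 := fun y => by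
    rw [inner_add_left, real_inner_smul_left]
    ring
  simp_rw [hexpand]
  rw [integral_add (by exact (integrable_const _).add (hint.const_mul _))
      (integrable_inner_pow hnorm u 2), integral_add (integrable_const _) (hint.const_mul _),
    integral_const, integral_const_mul, probReal_univ, one_smul,
    integral_inner_eq_zero hμ hg hperp, mul_zero, add_zero]

theorem integral_inner_sq_mul_finrank_sub_one [FiniteDimensional ℝ E] [IsProbabilityMeasure μ]
    (hμ : ∀ R : E ≃ₗᵢ[ℝ] E, R g = g → μ.map (fun y => R y) = μ) (hg : ‖g‖ = 1)
    (hperp : ∀ᵐ y ∂μ, ⟪y, g⟫ = 0) {r : ℝ} (hnorm : ∀ᵐ y ∂μ, ‖y‖ = r) (u : E) :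
    (∫ y, ⟪y, u⟫ ^ 2 ∂μ) * (Module.finrank ℝ E - 1) = r ^ 2 * (‖u‖ ^ 2 - ⟪g, u⟫ ^ 2) := by
  set b := stdOrthonormalBasis ℝ E
  set P : E → E := fun v => v - ⟪g, v⟫ • g
  have hP : ∀ v, ∫ y, ⟪y, P v⟫ ^ 2 ∂μ = ∫ y, ⟪y, v⟫ ^ 2 ∂μ :=
    integral_comp_inner_sub_inner_smul hperp (· ^ 2)
  have hcomm : ∀ i,
      (∫ y, ⟪y, P (b i)⟫ ^ 2 ∂μ) * ‖P u‖ ^ 2 = (∫ y, ⟪y, P u⟫ ^ 2 ∂μ) * ‖P (b i)‖ ^ 2 :=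
    fun i => integral_inner_sq_mul_norm_sq_comm hμ (inner_sub_inner_smul_eq_zero hg _)
      (inner_sub_inner_smul_eq_zero hg u)
  calc (∫ y, ⟪y, u⟫ ^ 2 ∂μ) * (Module.finrank ℝ E - 1)
      = (∫ y, ⟪y, P u⟫ ^ 2 ∂μ) * ∑ i, ‖P (b i)‖ ^ 2 := by
        rw [hP, sum_norm_sub_inner_smul_sq hg, Fintype.card_fin]
    _ = (∑ i, ∫ y, ⟪y, b i⟫ ^ 2 ∂μ) * ‖P u‖ ^ 2 := by
        simp_rw [Finset.mul_sum, Finset.sum_mul, ← hcomm, hP]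
    _ = r ^ 2 * (‖u‖ ^ 2 - ⟪g, u⟫ ^ 2) := by
        rw [sum_integral_inner_sq hnorm, norm_sub_inner_smul_sq hg]

end

/-- For unit vectors `g, ζ` with `x = ⟨g, ζ⟩`, `α ∈ [0,1]`, and a random vector `w`
uniformly distributed (invariant under all rotations fixing `g`) on the sphere of radius
`√(1-α²)` in the orthogonal complement of `g`, the random unit vector `g' = α g + w`
satisfies `E[⟨g', ζ⟩²] = α² x² + (1-α²)(1-x²)/(N-1)`. -/
theorem expected_inner_sq_perturbed_gradient
    (N : ℕ) (hN : 2 ≤ N)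
    {Ω : Type*} [MeasureSpace Ω] [IsProbabilityMeasure (volume : Measure Ω)]
    (g ζ : EuclideanSpace ℝ (Fin N)) (hg : ‖g‖ = 1) (hζ : ‖ζ‖ = 1)
    (x : ℝ) (hx : x = ⟪g, ζ⟫)
    (α : ℝ) (hα : α ∈ Set.Icc (0 : ℝ) 1)
    (w : Ω → EuclideanSpace ℝ (Fin N)) (hmeas : Measurable w)
    (hval : ∀ᵐ ω, ‖w ω‖ = Real.sqrt (1 - α ^ 2) ∧ ⟪w ω, g⟫ = 0)
    (hinv : ∀ R : EuclideanSpace ℝ (Fin N) ≃ₗᵢ[ℝ] EuclideanSpace ℝ (Fin N), R g = g →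
      Measure.map (fun y => R y) (Measure.map w volume) = Measure.map w volume) :
    ∫ ω, ⟪α • g + w ω, ζ⟫ ^ 2
      = α ^ 2 * x ^ 2 + (1 - α ^ 2) * (1 - x ^ 2) / ((N : ℝ) - 1) := by
  set μ := volume.map w
  have : IsProbabilityMeasure μ := Measure.isProbabilityMeasure_map hmeas.aemeasurable
  have hsupp : ∀ᵐ y ∂μ, ‖y‖ = √(1 - α ^ 2) ∧ ⟪y, g⟫ = 0 :=
    (ae_map_iff hmeas.aemeasurable (by measurability)).2 hval
  have hperp : ∀ᵐ y ∂μ, ⟪y, g⟫ = 0 := hsupp.mono fun _ h => h.2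
  have hnorm : ∀ᵐ y ∂μ, ‖y‖ = √(1 - α ^ 2) := hsupp.mono fun _ h => h.1
  have hmoment := integral_inner_sq_mul_finrank_sub_one hinv hg hperp hnorm ζ
  rw [finrank_euclideanSpace_fin, Real.sq_sqrt (by nlinarith [hα.1, hα.2]), hζ, ← hx, one_pow]
    at hmoment
  have hN1 : (N : ℝ) - 1 ≠ 0 := by
    have : (2 : ℝ) ≤ N := by exact_mod_cast hN
    linarith
  rw [← integral_map hmeas.aemeasurable (f := fun y => ⟪α • g + y, ζ⟫ ^ 2) (by fun_prop),
    integral_inner_smul_add_sq hinv hg hperp hnorm, (eq_div_iff hN1).2 hmoment, ← hx]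
  ring
end

section
/- Let N ≥ 2 and 1 ≤ P ≤ N−1. Let g and ζ be unit vectors in ℝᴺ with x = ⟨g, ζ⟩, and let α ∈ [0, 1]. Let w be a random vector distributed according to the uniform probability measure on the sphere of radius √(1−α²) in the orthogonal complement of g, and set g' = α·g + w. Let ε¹, …, εᴾ be random unit vectors taking values in the orthogonal complement of ζ, independent of w, such that almost surely they are pairwise orthogonal and each εⁱ is marginally distributed according to the uniform probability measure on the unit sphere of the orthogonal complement of ζ. Define ζ' = ⟨g', ζ⟩ζ + Σᵢ ⟨g', εⁱ⟩εⁱ and assume ζ' ≠ 0 almost surely. Then E[⟨g', ζ'/‖ζ'‖⟩²] = (α²x² + (1 − α²)(1 − x²)/(N − 1))·(1 − P/(N − 1)) + P/(N − 1). -/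
/-! `ζ'` is the orthogonal projection of `g'` onto the span of the orthonormal family
`ζ, ε¹, …, εᴾ`, so `⟪g', ζ'/‖ζ'‖⟫² = ‖ζ'‖² = ⟪g', ζ⟫² + ∑ᵢ ⟪g', εⁱ⟫²`. Every term is a second
moment of a rotation-invariant measure on a sphere of radius `r` in a hyperplane `g⊥`: reflections
fixing `g` show that such a measure has mean zero and the same second moment in every unit
direction of `g⊥`, and Parseval over an orthonormal basis of `g⊥` identifies this moment as
`r² / (N - 1)`. For the terms `⟪g', εⁱ⟫²`, independence and Fubini allow one to integrate over
`εⁱ` first with `g'` frozen, using `‖g'‖ = 1`. -/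

open scoped RealInnerProductSpace
open MeasureTheory ProbabilityTheory

lemma abs_real_inner_le_of_norm_le {E : Type*} [NormedAddCommGroup E] [InnerProductSpace ℝ E]
    {x y : E} {a b : ℝ} (hx : ‖x‖ ≤ a) (hy : ‖y‖ ≤ b) : |⟪x, y⟫| ≤ a * b :=
  (abs_real_inner_le_norm x y).trans (mul_le_mul hx hy (norm_nonneg _) ((norm_nonneg _).trans hx))

section

variable {α E : Type*} [MeasurableSpace α] {μ : Measure α} [IsFiniteMeasure μ]
  [NormedAddCommGroup E] [InnerProductSpace ℝ E] {X Y : α → E} {a b : ℝ}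

lemma integrable_inner_of_ae_norm_le (hX : AEStronglyMeasurable X μ)
    (hY : AEStronglyMeasurable Y μ) (hXa : ∀ᵐ ω ∂μ, ‖X ω‖ ≤ a) (hYb : ∀ᵐ ω ∂μ, ‖Y ω‖ ≤ b) :
    Integrable (fun ω => ⟪X ω, Y ω⟫) μ :=
  .of_bound (hX.inner hY) (a * b) <| by
    filter_upwards [hXa, hYb] with ω hx hy using abs_real_inner_le_of_norm_le hx hy

lemma integrable_inner_sq_of_ae_norm_le (hX : AEStronglyMeasurable X μ)
    (hY : AEStronglyMeasurable Y μ) (hXa : ∀ᵐ ω ∂μ, ‖X ω‖ ≤ a) (hYb : ∀ᵐ ω ∂μ, ‖Y ω‖ ≤ b) :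
    Integrable (fun ω => ⟪X ω, Y ω⟫ ^ 2) μ :=
  .of_bound ((hX.inner hY).pow 2) ((a * b) ^ 2) <| by
    filter_upwards [hXa, hYb] with ω hx hy
    rw [Real.norm_eq_abs, abs_pow]
    exact pow_le_pow_left₀ (abs_nonneg _) (abs_real_inner_le_of_norm_le hx hy) 2

end

lemma ProbabilityTheory.IndepFun.integral_comp_eq_integral_integral {Ω α β : Type*}
    [MeasurableSpace Ω] [MeasurableSpace α] [MeasurableSpace β] {μ : Measure Ω}
    [IsFiniteMeasure μ] {X : Ω → α} {Y : Ω → β} (hXY : IndepFun X Y μ) (hX : AEMeasurable X μ)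
    (hY : AEMeasurable Y μ) {f : α × β → ℝ} (hf : StronglyMeasurable f)
    (hfi : Integrable (fun ω => f (X ω, Y ω)) μ) :
    ∫ ω, f (X ω, Y ω) ∂μ = ∫ x, ∫ y, f (x, y) ∂(μ.map Y) ∂(μ.map X) := by
  have hmap := hXY.map_prod_eq_prod_map_map hX hY
  rw [← integral_map (hX.prodMk hY) hf.aestronglyMeasurable, hmap]
  refine integral_prod f ?_
  rw [← hmap]
  exact (integrable_map_measure hf.aestronglyMeasurable (hX.prodMk hY)).2 hfi

lemma inner_inv_norm_smul_sq_of_orthonormal {E ι : Type*} [NormedAddCommGroup E]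
    [InnerProductSpace ℝ E] [Fintype ι] {e : ι → E} (he : Orthonormal ℝ e) (u : E) :
    ⟪u, ‖∑ i, ⟪u, e i⟫ • e i‖⁻¹ • ∑ i, ⟪u, e i⟫ • e i⟫ ^ 2 = ∑ i, ⟪u, e i⟫ ^ 2 := by
  set v := ∑ i, ⟪u, e i⟫ • e i
  have huv : ⟪u, v⟫ = ‖v‖ ^ 2 := by
    rw [← real_inner_self_eq_norm_sq, he.inner_sum, inner_sum]
    simp [real_inner_smul_right]
  have hsum : ∑ i, ⟪u, e i⟫ ^ 2 = ‖v‖ ^ 2 := by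
    rw [← huv, inner_sum]
    simp [real_inner_smul_right, sq]
  rw [real_inner_smul_right, huv, hsum]
  -- at `v = 0` both sides vanish, as `‖0‖⁻¹ = 0`
  rcases eq_or_ne ‖v‖ 0 with h | h
  · simp [h]
  · field_simp

lemma orthonormal_fin_cons {E : Type*} [NormedAddCommGroup E] [InnerProductSpace ℝ E] {n : ℕ}
    {z : E} {e : Fin n → E} (hz : ‖z‖ = 1) (he : Orthonormal ℝ e) (hez : ∀ i, ⟪e i, z⟫ = 0) :
    Orthonormal ℝ (Fin.cons z e : Fin (n + 1) → E) := by
  classical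
  rw [orthonormal_iff_ite] at he ⊢
  intro i j
  cases i using Fin.cases <;> cases j using Fin.cases <;>
    simp [hz, hez, real_inner_comm _ z, he, (Fin.succ_ne_zero _).symm]

section

variable {E : Type*} [NormedAddCommGroup E] [InnerProductSpace ℝ E] [MeasurableSpace E]

/-- Together with `IsProbabilityMeasure μ`, this characterises the uniform probability measure
on the sphere of radius `r` in the orthogonal complement of a unit vector `g`. -/
structure IsUniformOnOrthSphere (μ : Measure E) (g : E) (r : ℝ) : Prop where
  ae_norm_eq_and_inner_eq_zero : ∀ᵐ y ∂μ, ‖y‖ = r ∧ ⟪y, g⟫ = 0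
  map_eq : ∀ R : E ≃ₗᵢ[ℝ] E, R g = g → μ.map R = μ

lemma isUniformOnOrthSphere_map [OpensMeasurableSpace E] {Ω : Type*} [MeasurableSpace Ω]
    {μ : Measure Ω} {X : Ω → E} (hX : Measurable X) {g : E} {r : ℝ}
    (hval : ∀ᵐ ω ∂μ, ‖X ω‖ = r ∧ ⟪X ω, g⟫ = 0)
    (hinv : ∀ R : E ≃ₗᵢ[ℝ] E, R g = g → (μ.map X).map R = μ.map X) :
    IsUniformOnOrthSphere (μ.map X) g r := by
  refine ⟨(ae_map_iff hX.aemeasurable ?_).2 hval, hinv⟩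
  exact (isClosed_eq continuous_norm continuous_const).measurableSet.inter
    (isClosed_eq (continuous_id.inner continuous_const) continuous_const).measurableSet

namespace IsUniformOnOrthSphere

variable {μ : Measure E} {g : E} {r : ℝ}

lemma ae_norm_eq (h : IsUniformOnOrthSphere μ g r) : ∀ᵐ y ∂μ, ‖y‖ = r :=
  h.ae_norm_eq_and_inner_eq_zero.mono fun _ hy => hy.1

lemma ae_inner_eq_zero (h : IsUniformOnOrthSphere μ g r) : ∀ᵐ y ∂μ, ⟪y, g⟫ = 0 :=
  h.ae_norm_eq_and_inner_eq_zero.mono fun _ hy => hy.2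

lemma ae_norm_smul_add_sq (h : IsUniformOnOrthSphere μ g r) (hg : ‖g‖ = 1) (c : ℝ) :
    ∀ᵐ y ∂μ, ‖c • g + y‖ ^ 2 = c ^ 2 + r ^ 2 := by
  filter_upwards [h.ae_norm_eq_and_inner_eq_zero] with y ⟨hyr, hyg⟩
  rw [norm_add_sq_real, real_inner_smul_left, real_inner_comm, hyg, norm_smul, hg, hyr]
  simp

lemma integral_comp_eq [BorelSpace E] (h : IsUniformOnOrthSphere μ g r) {F : Type*}
    [NormedAddCommGroup F] [NormedSpace ℝ F] (R : E ≃ₗᵢ[ℝ] E) (hR : R g = g) (f : E → F) :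
    ∫ y, f (R y) ∂μ = ∫ y, f y ∂μ :=
  MeasurePreserving.integral_comp ⟨R.continuous.measurable, h.map_eq R hR⟩
    R.toHomeomorph.measurableEmbedding f

lemma integral_inner_eq_zero [BorelSpace E] (h : IsUniformOnOrthSphere μ g r) (v : E) :
    ∫ y, ⟪y, v⟫ ∂μ = 0 := by
  -- the reflection in the line `ℝ ∙ g` fixes `g` and is `-1` on `g⊥`, which carries `μ`
  have hneg : ∀ᵐ y ∂μ, ⟪(ℝ ∙ g).reflection y, v⟫ = -⟪y, v⟫ := by
    filter_upwards [h.ae_inner_eq_zero] with y hy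
    rw [Submodule.reflection_mem_subspace_orthogonalComplement_eq_neg
      (Submodule.mem_orthogonal_singleton_iff_inner_left.2 hy), inner_neg_left]
  have := h.integral_comp_eq _ (Submodule.reflection_mem_subspace_eq_self
    (Submodule.mem_span_singleton_self g)) fun y => ⟪y, v⟫
  rw [integral_congr_ae hneg, integral_neg] at this
  linarith

lemma integral_inner_sq_eq_of_unit [BorelSpace E] (h : IsUniformOnOrthSphere μ g r) {u v : E}
    (hu : ‖u‖ = 1) (hv : ‖v‖ = 1) (hug : ⟪u, g⟫ = 0) (hvg : ⟪v, g⟫ = 0) :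
    ∫ y, ⟪y, u⟫ ^ 2 ∂μ = ∫ y, ⟪y, v⟫ ^ 2 ∂μ := by
  set R := (ℝ ∙ (u - v))ᗮ.reflection
  have hRg : R g = g := Submodule.reflection_mem_subspace_eq_self
    (Submodule.mem_orthogonal_singleton_iff_inner_right.2 (by rw [inner_sub_left, hug, hvg,
      sub_zero]))
  have hRu : R u = v := Submodule.reflection_sub (hu.trans hv.symm)
  rw [← h.integral_comp_eq R hRg fun y => ⟪y, v⟫ ^ 2]
  simp_rw [← hRu, R.inner_map_map]

variable [FiniteDimensional ℝ E] [BorelSpace E]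

lemma integrable_inner [IsFiniteMeasure μ] (h : IsUniformOnOrthSphere μ g r) (v : E) :
    Integrable (fun y => ⟪y, v⟫) μ :=
  integrable_inner_of_ae_norm_le aestronglyMeasurable_id aestronglyMeasurable_const
    (h.ae_norm_eq.mono fun _ hy => hy.le) (.of_forall fun _ => le_rfl)

lemma integrable_inner_sq [IsFiniteMeasure μ] (h : IsUniformOnOrthSphere μ g r) (v : E) :
    Integrable (fun y => ⟪y, v⟫ ^ 2) μ :=
  integrable_inner_sq_of_ae_norm_le aestronglyMeasurable_id aestronglyMeasurable_const
    (h.ae_norm_eq.mono fun _ hy => hy.le) (.of_forall fun _ => le_rfl)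

variable [IsProbabilityMeasure μ]

lemma finrank_sub_one_mul_integral_inner_sq_of_unit (h : IsUniformOnOrthSphere μ g r)
    (hg : g ≠ 0) {e : E} (he : ‖e‖ = 1) (heg : ⟪e, g⟫ = 0) :
    ((Module.finrank ℝ E : ℝ) - 1) * ∫ y, ⟪y, e⟫ ^ 2 ∂μ = r ^ 2 := by
  set K := (ℝ ∙ g)ᗮ
  set b := stdOrthonormalBasis ℝ K
  have hcard : (Module.finrank ℝ E : ℝ) - 1 = Module.finrank ℝ K := by
    have := (ℝ ∙ g).finrank_add_finrank_orthogonal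
    rw [finrank_span_singleton hg] at this
    rw [← this]
    push_cast
    ring
  have hparseval : ∀ᵐ y ∂μ, ∑ i, ⟪y, (b i : E)⟫ ^ 2 = r ^ 2 := by
    filter_upwards [h.ae_norm_eq_and_inner_eq_zero] with y ⟨hyr, hyg⟩
    have hyK : y ∈ K := Submodule.mem_orthogonal_singleton_iff_inner_left.2 hyg
    simpa [hyr] using b.sum_sq_inner_left ⟨y, hyK⟩
  have hterm i : ∫ y, ⟪y, (b i : E)⟫ ^ 2 ∂μ = ∫ y, ⟪y, e⟫ ^ 2 ∂μ :=
    h.integral_inner_sq_eq_of_unit (b.orthonormal.1 i) he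
      (Submodule.mem_orthogonal_singleton_iff_inner_left.1 (b i).2) heg
  have := integral_congr_ae hparseval
  rw [integral_finsetSum _ fun i _ => h.integrable_inner_sq _] at this
  simp_rw [hterm] at this
  simpa [hcard] using this

lemma integral_inner_sq_of_inner_eq_zero (h : IsUniformOnOrthSphere μ g r) (hg : g ≠ 0)
    (hd : 2 ≤ Module.finrank ℝ E) {v : E} (hvg : ⟪v, g⟫ = 0) :
    ∫ y, ⟪y, v⟫ ^ 2 ∂μ = r ^ 2 * ‖v‖ ^ 2 / ((Module.finrank ℝ E : ℝ) - 1) := by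
  rcases eq_or_ne v 0 with rfl | hv
  · simp
  have hd' : (Module.finrank ℝ E : ℝ) - 1 ≠ 0 := by
    linarith [(show (2 : ℝ) ≤ Module.finrank ℝ E by exact_mod_cast hd)]
  have hv' : ‖v‖ ≠ 0 := norm_ne_zero_iff.2 hv
  set e := ‖v‖⁻¹ • v
  have hscale y : ⟪y, v⟫ ^ 2 = ‖v‖ ^ 2 * ⟪y, e⟫ ^ 2 := by
    simp only [e, real_inner_smul_right]
    field_simp
  have := h.finrank_sub_one_mul_integral_inner_sq_of_unit hg (e := e)
    (by simp [e, norm_smul, hv']) (by simp [e, real_inner_smul_left, hvg])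
  simp_rw [hscale, integral_const_mul]
  field_simp
  linarith

lemma integral_inner_sq (h : IsUniformOnOrthSphere μ g r) (hg : ‖g‖ = 1)
    (hd : 2 ≤ Module.finrank ℝ E) (v : E) :
    ∫ y, ⟪y, v⟫ ^ 2 ∂μ = r ^ 2 * (‖v‖ ^ 2 - ⟪v, g⟫ ^ 2) / ((Module.finrank ℝ E : ℝ) - 1) := by
  set v' := v - ⟪v, g⟫ • g
  have hv'g : ⟪v', g⟫ = 0 := by simp [v', inner_sub_left, real_inner_smul_left, hg]
  have hnorm : ‖v'‖ ^ 2 = ‖v‖ ^ 2 - ⟪v, g⟫ ^ 2 := by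
    have := norm_add_sq_eq_norm_sq_add_norm_sq_real (x := ⟪v, g⟫ • g) (y := v')
      (by rw [real_inner_smul_left, ← real_inner_comm g v', hv'g, mul_zero])
    rw [add_sub_cancel, norm_smul, hg, mul_one, Real.norm_eq_abs, abs_mul_abs_self] at this
    linear_combination -this
  have hae : ∀ᵐ y ∂μ, ⟪y, v⟫ ^ 2 = ⟪y, v'⟫ ^ 2 := by
    filter_upwards [h.ae_inner_eq_zero] with y hy
    simp [v', inner_sub_right, real_inner_smul_right, hy]
  have hg0 : g ≠ 0 := norm_ne_zero_iff.1 (by simp [hg])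
  rw [integral_congr_ae hae, h.integral_inner_sq_of_inner_eq_zero hg0 hd hv'g, hnorm]

lemma integral_inner_smul_add_sq (h : IsUniformOnOrthSphere μ g r) (hg : ‖g‖ = 1)
    (hd : 2 ≤ Module.finrank ℝ E) (c : ℝ) (v : E) :
    ∫ y, ⟪c • g + y, v⟫ ^ 2 ∂μ
      = c ^ 2 * ⟪g, v⟫ ^ 2 + r ^ 2 * (‖v‖ ^ 2 - ⟪v, g⟫ ^ 2) / ((Module.finrank ℝ E : ℝ) - 1) := by
  have hexp y : ⟪c • g + y, v⟫ ^ 2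
      = c ^ 2 * ⟪g, v⟫ ^ 2 + (2 * c * ⟪g, v⟫ * ⟪y, v⟫ + ⟪y, v⟫ ^ 2) := by
    rw [inner_add_left, real_inner_smul_left]
    ring
  have hlin : Integrable (fun y => 2 * c * ⟪g, v⟫ * ⟪y, v⟫) μ :=
    (h.integrable_inner v).const_mul _
  simp_rw [hexp]
  rw [integral_add (integrable_const _) (g := fun y => 2 * c * ⟪g, v⟫ * ⟪y, v⟫ + ⟪y, v⟫ ^ 2)
      (hlin.add (h.integrable_inner_sq v)), integral_add hlin (h.integrable_inner_sq v),
    integral_const_mul (2 * c * ⟪g, v⟫), h.integral_inner_eq_zero, h.integral_inner_sq hg hd]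
  simp

end IsUniformOnOrthSphere

variable {Ω : Type*} [MeasurableSpace Ω] {μ : Measure Ω} {g : E}

lemma ae_norm_smul_add_comp_eq_one {W : Ω → E} (hW : Measurable W) {c : ℝ}
    (hWg : IsUniformOnOrthSphere (μ.map W) g √(1 - c ^ 2)) (hg : ‖g‖ = 1) (hc : c ^ 2 ≤ 1) :
    ∀ᵐ ω ∂μ, ‖c • g + W ω‖ = 1 := by
  filter_upwards [ae_of_ae_map hW.aemeasurable (hWg.ae_norm_smul_add_sq hg c)] with ω h
  rw [← pow_left_inj₀ (norm_nonneg _) zero_le_one two_ne_zero, h, Real.sq_sqrt (by linarith),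
    add_sub_cancel, one_pow]

variable [FiniteDimensional ℝ E] [BorelSpace E] [IsProbabilityMeasure μ]

lemma integral_inner_smul_add_comp_sq {W : Ω → E} (hW : Measurable W) {r : ℝ}
    (hWg : IsUniformOnOrthSphere (μ.map W) g r) (hg : ‖g‖ = 1) (hd : 2 ≤ Module.finrank ℝ E)
    (c : ℝ) (v : E) :
    ∫ ω, ⟪c • g + W ω, v⟫ ^ 2 ∂μ
      = c ^ 2 * ⟪g, v⟫ ^ 2 + r ^ 2 * (‖v‖ ^ 2 - ⟪v, g⟫ ^ 2) / ((Module.finrank ℝ E : ℝ) - 1) := by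
  have := Measure.isProbabilityMeasure_map (μ := μ) hW.aemeasurable
  have hcont : Continuous fun y => ⟪c • g + y, v⟫ ^ 2 := by fun_prop
  rw [← integral_map hW.aemeasurable hcont.aestronglyMeasurable,
    hWg.integral_inner_smul_add_sq hg hd]

lemma integral_inner_sq_of_indepFun {X Y : Ω → E}
    (hX : Measurable X) (hY : Measurable Y) (hXY : IndepFun X Y μ) (hXn : ∀ᵐ ω ∂μ, ‖X ω‖ = 1)
    {z : E} (hz : ‖z‖ = 1) (hd : 2 ≤ Module.finrank ℝ E)
    (hYz : IsUniformOnOrthSphere (μ.map Y) z 1) :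
    ∫ ω, ⟪X ω, Y ω⟫ ^ 2 ∂μ = (1 - ∫ ω, ⟪X ω, z⟫ ^ 2 ∂μ) / ((Module.finrank ℝ E : ℝ) - 1) := by
  have := Measure.isProbabilityMeasure_map (μ := μ) hY.aemeasurable
  have hXle : ∀ᵐ ω ∂μ, ‖X ω‖ ≤ 1 := hXn.mono fun _ h => h.le
  have hint := integrable_inner_sq_of_ae_norm_le hX.aestronglyMeasurable hY.aestronglyMeasurable
    hXle (ae_of_ae_map hY.aemeasurable hYz.ae_norm_eq |>.mono fun _ h => h.le)
  have hzint := integrable_inner_sq_of_ae_norm_le hX.aestronglyMeasurable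
    aestronglyMeasurable_const hXle (.of_forall fun _ => hz.le)
  have hf : StronglyMeasurable fun p : E × E => ⟪p.1, p.2⟫ ^ 2 :=
    ((continuous_fst.inner continuous_snd).pow 2).stronglyMeasurable
  have hinner x : ∫ y, ⟪x, y⟫ ^ 2 ∂(μ.map Y)
      = (‖x‖ ^ 2 - ⟪x, z⟫ ^ 2) / ((Module.finrank ℝ E : ℝ) - 1) := by
    have := hYz.integral_inner_sq hz hd x
    rw [one_pow, one_mul] at this
    rw [← this]
    simp_rw [real_inner_comm x]
  rw [hXY.integral_comp_eq_integral_integral hX.aemeasurable hY.aemeasurable hf hint]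
  simp_rw [hinner]
  rw [integral_map hX.aemeasurable (by fun_prop), integral_div,
    integral_congr_ae (hXn.mono fun ω h => by rw [h, one_pow]),
    integral_sub (integrable_const 1) hzint]
  simp

end

theorem expected_cosine_sq_one_step_nonlinear_general
    (N P : ℕ) (hN : 2 ≤ N)
    {Ω : Type*} [MeasureSpace Ω] [IsProbabilityMeasure (volume : Measure Ω)]
    (g ζ : EuclideanSpace ℝ (Fin N)) (hg : ‖g‖ = 1) (hζ : ‖ζ‖ = 1)
    (x : ℝ) (hx : x = ⟪g, ζ⟫)
    (α : ℝ) (hα : α ∈ Set.Icc (0 : ℝ) 1)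
    (w : Ω → EuclideanSpace ℝ (Fin N)) (hwmeas : Measurable w)
    (hwval : ∀ᵐ ω, ‖w ω‖ = Real.sqrt (1 - α ^ 2) ∧ ⟪w ω, g⟫ = 0)
    (hwinv : ∀ R : EuclideanSpace ℝ (Fin N) ≃ₗᵢ[ℝ] EuclideanSpace ℝ (Fin N), R g = g →
      Measure.map (fun y => R y) (Measure.map w volume) = Measure.map w volume)
    (g' : Ω → EuclideanSpace ℝ (Fin N)) (hg' : ∀ ω, g' ω = α • g + w ω)
    (ε : Fin P → Ω → EuclideanSpace ℝ (Fin N)) (hεmeas : ∀ i, Measurable (ε i))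
    (hεval : ∀ᵐ ω, ∀ i, ‖ε i ω‖ = 1 ∧ ⟪ε i ω, ζ⟫ = 0)
    (hεorth : ∀ᵐ ω, ∀ i j, i ≠ j → ⟪ε i ω, ε j ω⟫ = 0)
    (hεinv : ∀ i, ∀ R : EuclideanSpace ℝ (Fin N) ≃ₗᵢ[ℝ] EuclideanSpace ℝ (Fin N), R ζ = ζ →
      Measure.map (fun y => R y) (Measure.map (ε i) volume) = Measure.map (ε i) volume)
    (hindep : IndepFun w (fun ω => fun i => ε i ω) volume)
    (ζ' : Ω → EuclideanSpace ℝ (Fin N))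
    (hζ' : ∀ ω, ζ' ω = ⟪g' ω, ζ⟫ • ζ + ∑ i, ⟪g' ω, ε i ω⟫ • ε i ω) :
    ∫ ω, ⟪g' ω, ‖ζ' ω‖⁻¹ • ζ' ω⟫ ^ 2
      = (α ^ 2 * x ^ 2 + (1 - α ^ 2) * (1 - x ^ 2) / ((N : ℝ) - 1))
          * (1 - (P : ℝ) / ((N : ℝ) - 1)) + (P : ℝ) / ((N : ℝ) - 1) := by
  have hd : 2 ≤ Module.finrank ℝ (EuclideanSpace ℝ (Fin N)) := by simpa using hN
  have hN1 : (N : ℝ) - 1 ≠ 0 := by linarith [(show (2 : ℝ) ≤ N by exact_mod_cast hN)]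
  have hα2 : α ^ 2 ≤ 1 := by nlinarith [hα.1, hα.2]
  have hg'w : g' = fun ω => α • g + w ω := funext hg'
  have hg'meas : Measurable g' := hg'w ▸ measurable_const.add hwmeas
  have hw := isUniformOnOrthSphere_map hwmeas hwval hwinv
  have hg'n : ∀ᵐ ω, ‖g' ω‖ = 1 := by
    simpa only [hg'] using ae_norm_smul_add_comp_eq_one hwmeas hw hg hα2
  have hint (v : Ω → EuclideanSpace ℝ (Fin N)) (hv : Measurable v) (hvn : ∀ᵐ ω, ‖v ω‖ = 1) :
      Integrable (fun ω => ⟪g' ω, v ω⟫ ^ 2) :=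
    integrable_inner_sq_of_ae_norm_le hg'meas.aestronglyMeasurable hv.aestronglyMeasurable
      (hg'n.mono fun _ h => h.le) (hvn.mono fun _ h => h.le)
  have hεint i := hint (ε i) (hεmeas i) (hεval.mono fun _ h => (h i).1)
  set C := α ^ 2 * x ^ 2 + (1 - α ^ 2) * (1 - x ^ 2) / ((N : ℝ) - 1)
  have hζterm : ∫ ω, ⟪g' ω, ζ⟫ ^ 2 = C := by
    simp_rw [hg']
    rw [integral_inner_smul_add_comp_sq hwmeas hw hg hd, hζ, finrank_euclideanSpace_fin,
      Real.sq_sqrt (by linarith), ← hx, real_inner_comm, ← hx]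
    ring
  have hεterm i : ∫ ω, ⟪g' ω, ε i ω⟫ ^ 2 = (1 - C) / ((N : ℝ) - 1) := by
    rw [integral_inner_sq_of_indepFun hg'meas (hεmeas i)
      (hg'w ▸ hindep.comp (measurable_const.add measurable_id) (measurable_pi_apply i)) hg'n hζ
      hd (isUniformOnOrthSphere_map (hεmeas i) (hεval.mono fun _ h => h i) (hεinv i)),
      hζterm, finrank_euclideanSpace_fin]
  have hpt : ∀ᵐ ω, ⟪g' ω, ‖ζ' ω‖⁻¹ • ζ' ω⟫ ^ 2 = ⟪g' ω, ζ⟫ ^ 2 + ∑ i, ⟪g' ω, ε i ω⟫ ^ 2 := by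
    filter_upwards [hεval, hεorth] with ω hval horth
    have := inner_inv_norm_smul_sq_of_orthonormal (orthonormal_fin_cons hζ
      ⟨fun i => (hval i).1, fun i j hij => horth i j hij⟩ fun i => (hval i).2) (g' ω)
    simpa [Fin.sum_univ_succ, ← hζ'] using this
  rw [integral_congr_ae hpt, integral_add (hint _ measurable_const (.of_forall fun _ => hζ))
    (integrable_finsetSum _ fun i _ => hεint i), integral_finsetSum _ fun i _ => hεint i, hζterm]
  simp_rw [hεterm]
  simp
  field_simp
  ring

/-- One step of the iterative estimator for a perturbed gradient: for unit vectors `g, ζ`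
with `x = ⟨g, ζ⟩`, `α ∈ [0,1]`, a random vector `w` uniform on the sphere of radius
`√(1-α²)` in the orthogonal complement of `g`, `g' = α g + w`, and random unit vectors
`ε¹, …, εᴾ` in the orthogonal complement of `ζ` (independent of `w`, almost surely pairwise
orthogonal, each marginally uniform on the unit sphere of that complement), the update
`ζ' = ⟨g', ζ⟩ ζ + ∑ i ⟨g', εⁱ⟩ εⁱ` satisfies
`E[⟨g', ζ̂'⟩²] = (α² x² + (1-α²)(1-x²)/(N-1)) (1 - P/(N-1)) + P/(N-1)`. -/
theorem expected_cosine_sq_one_step_nonlinear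
    (N P : ℕ) (hN : 2 ≤ N) (hP : 1 ≤ P) (hPN : P ≤ N - 1)
    {Ω : Type*} [MeasureSpace Ω] [IsProbabilityMeasure (volume : Measure Ω)]
    (g ζ : EuclideanSpace ℝ (Fin N)) (hg : ‖g‖ = 1) (hζ : ‖ζ‖ = 1)
    (x : ℝ) (hx : x = ⟪g, ζ⟫)
    (α : ℝ) (hα : α ∈ Set.Icc (0 : ℝ) 1)
    (w : Ω → EuclideanSpace ℝ (Fin N)) (hwmeas : Measurable w)
    (hwval : ∀ᵐ ω, ‖w ω‖ = Real.sqrt (1 - α ^ 2) ∧ ⟪w ω, g⟫ = 0)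
    (hwinv : ∀ R : EuclideanSpace ℝ (Fin N) ≃ₗᵢ[ℝ] EuclideanSpace ℝ (Fin N), R g = g →
      Measure.map (fun y => R y) (Measure.map w volume) = Measure.map w volume)
    (g' : Ω → EuclideanSpace ℝ (Fin N)) (hg' : ∀ ω, g' ω = α • g + w ω)
    (ε : Fin P → Ω → EuclideanSpace ℝ (Fin N)) (hεmeas : ∀ i, Measurable (ε i))
    (hεval : ∀ᵐ ω, ∀ i, ‖ε i ω‖ = 1 ∧ ⟪ε i ω, ζ⟫ = 0)
    (hεorth : ∀ᵐ ω, ∀ i j, i ≠ j → ⟪ε i ω, ε j ω⟫ = 0)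
    (hεinv : ∀ i, ∀ R : EuclideanSpace ℝ (Fin N) ≃ₗᵢ[ℝ] EuclideanSpace ℝ (Fin N), R ζ = ζ →
      Measure.map (fun y => R y) (Measure.map (ε i) volume) = Measure.map (ε i) volume)
    (hindep : IndepFun w (fun ω => fun i => ε i ω) volume)
    (ζ' : Ω → EuclideanSpace ℝ (Fin N))
    (hζ' : ∀ ω, ζ' ω = ⟪g' ω, ζ⟫ • ζ + ∑ i, ⟪g' ω, ε i ω⟫ • ε i ω)
    (hζ'0 : ∀ᵐ ω, ζ' ω ≠ 0) :
    ∫ ω, ⟪g' ω, ‖ζ' ω‖⁻¹ • ζ' ω⟫ ^ 2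
      = (α ^ 2 * x ^ 2 + (1 - α ^ 2) * (1 - x ^ 2) / ((N : ℝ) - 1))
          * (1 - (P : ℝ) / ((N : ℝ) - 1)) + (P : ℝ) / ((N : ℝ) - 1) :=
  expected_cosine_sq_one_step_nonlinear_general N P hN g ζ hg hζ x hx α hα w hwmeas hwval hwinv g'
    hg' ε hεmeas hεval hεorth hεinv hindep ζ' hζ'
end
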